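/- arXiv:1009.4926 — 6 statements merged into one kernel-verified Lean document; each statement's English description precedes it below -/
import Mathlib

section
/- For u ∈ (0,π) one has a_{1/2}(u) = 1/(4·cos²(u/2)), and the pushforward under u ↦ 1/(4·cos²(u/2)) of the uniform probability measure on (0,π) is absolutely continuous with density y ↦ 1/(2π·y·√(y − 1/4)) on (1/4, ∞) (and density 0 on (0, 1/4)). -/
open Real MeasureTheory

/-- `c_α(u) = sin(αu)/sin(u)`. -/
noncomputable def kanterC (α u : ℝ) : ℝ := Real.sin (α * u) / Real.sin u

/-- `b_α(u) = c_α(u)^α · c_{1−α}(u)^{1−α}`. -/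
noncomputable def kanterB (α u : ℝ) : ℝ :=
  kanterC α u ^ α * kanterC (1 - α) u ^ (1 - α)

/-- Kanter`s function `a_α(u) = b_α(u)^{1/(1−α)}`. -/
noncomputable def kanterA (α u : ℝ) : ℝ := kanterB α u ^ (1 / (1 - α))

/-- The uniform probability measure on `(0,π)`. -/
noncomputable def uniformIoo : Measure ℝ :=
  (ENNReal.ofReal π)⁻¹ • volume.restrict (Set.Ioo 0 π)

/-!
For `α = 1/2` both factors of `b_{1/2}` are `√(c_{1/2})`, so `a_{1/2} = c_{1/2}²`, and the double
angle formula gives `c_{1/2}(u) = 1/(2 cos(u/2))`.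

Since `1/(4 cos²(u/2)) = 1/4 + (tan(u/2)/2)²`, this map is a bijection from `(0,π)` onto
`(1/4,∞)` with inverse `y ↦ 2 arctan(2√(y - 1/4))`, whose derivative is `1/(2y√(y - 1/4))`.
Pushing Lebesgue measure on `(0,π)` forward along the map is the one-dimensional change of
variables formula for the inverse.
-/

open Set

lemma kanterA_half_eq_sq {u : ℝ} (hc : 0 ≤ kanterC (1/2) u) :
    kanterA (1/2) u = kanterC (1/2) u ^ 2 := by
  have hB : kanterB (1/2) u = kanterC (1/2) u := by
    rw [kanterB, show (1 : ℝ) - 1/2 = 1/2 by norm_num, ← rpow_add' hc (by norm_num)]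
    norm_num
  rw [kanterA, hB]
  norm_num

lemma kanterC_half_eq {u : ℝ} (hu : sin (u / 2) ≠ 0) :
    kanterC (1/2) u = 1 / (2 * cos (u / 2)) := by
  have hsin : sin u = 2 * sin (u / 2) * cos (u / 2) := by
    rw [← sin_two_mul, mul_div_cancel₀ _ two_ne_zero]
  rw [kanterC, hsin, one_div_mul_eq_div]
  rcases eq_or_ne (cos (u / 2)) 0 with hc | hc
  -- both sides are junk `_ / 0 = 0` here
  · simp [hc]
  · field_simp

lemma kanterA_half {u : ℝ} (hu : u ∈ Ioo 0 π) :
    kanterA (1/2) u = 1 / (4 * cos (u / 2) ^ 2) := by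
  obtain ⟨hu0, huπ⟩ := hu
  have hsin : 0 < sin (u / 2) := sin_pos_of_pos_of_lt_pi (by linarith) (by linarith)
  have hcos : 0 < cos (u / 2) := cos_pos_of_mem_Ioo ⟨by linarith, by linarith⟩
  have hc := kanterC_half_eq hsin.ne'
  rw [kanterA_half_eq_sq (by rw [hc]; positivity), hc]
  ring

lemma map_withDensity_abs_deriv_eq_volume {s : Set ℝ} {g g' : ℝ → ℝ} (hs : MeasurableSet s)
    (hg' : ∀ x ∈ s, HasDerivWithinAt g (g' x) s x) (hg : InjOn g s) :
    Measure.map g ((volume.restrict s).withDensity fun x => ENNReal.ofReal |g' x|) =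
      volume.restrict (g '' s) := by
  simpa only [ContinuousLinearMap.det_toSpanSingleton] using
    map_withDensity_abs_det_fderiv_eq_addHaar volume hs.nullMeasurableSet
      (fun x hx => (hg' x hx).hasFDerivWithinAt) hg

lemma map_volume_restrict_image_eq_withDensity {s : Set ℝ} {f g g' : ℝ → ℝ}
    (hf : Measurable f) (hg : Measurable g) (hs : MeasurableSet s)
    (hg' : ∀ x ∈ s, HasDerivWithinAt g (g' x) s x) (hfg : LeftInvOn f g s) :
    Measure.map f (volume.restrict (g '' s)) =
      (volume.restrict s).withDensity fun x => ENNReal.ofReal |g' x| := by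
  rw [← map_withDensity_abs_deriv_eq_volume hs hg' hfg.injOn, Measure.map_map hf hg]
  conv_rhs => rw [← Measure.map_id (μ := (volume.restrict s).withDensity _)]
  refine Measure.map_congr ?_
  filter_upwards [withDensity_absolutelyContinuous _ _ (ae_restrict_mem hs)] with x hx
  exact hfg hx

noncomputable def kanterHalfInv (y : ℝ) : ℝ := 2 * arctan (2 * √(y - 1/4))

lemma one_div_four_mul_cos_sq_eq {x : ℝ} (hx : cos x ≠ 0) :
    1 / (4 * cos x ^ 2) = 1/4 + (tan x / 2) ^ 2 := by
  rw [← inv_one_add_tan_sq hx]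
  field_simp
  ring

lemma one_div_four_mul_cos_sq_kanterHalfInv {y : ℝ} (hy : 1/4 ≤ y) :
    1 / (4 * cos (kanterHalfInv y / 2) ^ 2) = y := by
  have hsq : (2 * √(y - 1/4)) ^ 2 = 4 * y - 1 := by
    rw [mul_pow, sq_sqrt (by linarith)]
    ring
  rw [kanterHalfInv, mul_div_cancel_left₀ _ two_ne_zero, cos_sq_arctan, hsq]
  field_simp
  ring

lemma kanterHalfInv_one_div_four_mul_cos_sq {u : ℝ} (hu : u ∈ Ioo 0 π) :
    kanterHalfInv (1 / (4 * cos (u / 2) ^ 2)) = u := by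
  obtain ⟨hu0, huπ⟩ := hu
  have htan : 0 ≤ tan (u / 2) := (tan_pos_of_pos_of_lt_pi_div_two (by linarith) (by linarith)).le
  have hcos : cos (u / 2) ≠ 0 := (cos_pos_of_mem_Ioo ⟨by linarith, by linarith⟩).ne'
  rw [kanterHalfInv, one_div_four_mul_cos_sq_eq hcos, add_sub_cancel_left,
    sqrt_sq (by positivity), mul_div_cancel₀ _ two_ne_zero,
    arctan_tan (by linarith) (by linarith)]
  ring

lemma kanterHalfInv_mem_Ioo {y : ℝ} (hy : 1/4 < y) : kanterHalfInv y ∈ Ioo 0 π := by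
  have hpos : 0 < arctan (2 * √(y - 1/4)) := arctan_pos.mpr (by positivity)
  have hlt := arctan_lt_pi_div_two (2 * √(y - 1/4))
  rw [kanterHalfInv]
  exact ⟨by linarith, by linarith⟩

lemma image_kanterHalfInv_Ioi : kanterHalfInv '' Ioi (1/4) = Ioo 0 π := by
  refine Subset.antisymm (image_subset_iff.mpr fun y hy => kanterHalfInv_mem_Ioo hy)
    fun u hu => ⟨_, ?_, kanterHalfInv_one_div_four_mul_cos_sq hu⟩
  obtain ⟨hu0, huπ⟩ := hu
  have hcos : cos (u / 2) ≠ 0 := (cos_pos_of_mem_Ioo ⟨by linarith, by linarith⟩).ne'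
  have htan : 0 < tan (u / 2) := tan_pos_of_pos_of_lt_pi_div_two (by linarith) (by linarith)
  rw [mem_Ioi, one_div_four_mul_cos_sq_eq hcos]
  exact lt_add_of_pos_right _ (by positivity)

lemma hasDerivAt_kanterHalfInv {y : ℝ} (hy : 1/4 < y) :
    HasDerivAt kanterHalfInv (1 / (2 * y * √(y - 1/4))) y := by
  have hd : 0 < y - 1/4 := by linarith
  have hy0 : 0 < y := by linarith
  have h := ((((hasDerivAt_id y).sub_const (1/4)).sqrt hd.ne').const_mul 2).arctan.const_mul 2
  refine h.congr_deriv ?_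
  have h4y : 1 + (2 * √(y - 1/4)) ^ 2 = 4 * y := by
    rw [mul_pow, sq_sqrt hd.le]
    ring
  have hsqrt : √(y - 1/4) ≠ 0 := (sqrt_pos.mpr hd).ne'
  simp only [id, h4y]
  generalize √(y - 1/4) = r at hsqrt ⊢
  field_simp
  norm_num

lemma map_uniformIoo_one_div_four_mul_cos_sq :
    Measure.map (fun u => 1 / (4 * cos (u / 2) ^ 2)) uniformIoo
      = volume.withDensity (fun y => ENNReal.ofReal
          (if 1 / 4 < y then 1 / (2 * π * y * √(y - 1 / 4)) else 0)) := by
  have hf : Measurable fun u : ℝ => 1 / (4 * cos (u / 2) ^ 2) := by fun_prop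
  have hg : Measurable kanterHalfInv := by unfold kanterHalfInv; fun_prop
  have hpush := map_volume_restrict_image_eq_withDensity hf hg measurableSet_Ioi
    (fun y hy => (hasDerivAt_kanterHalfInv hy).hasDerivWithinAt)
    (fun y hy => one_div_four_mul_cos_sq_kanterHalfInv (le_of_lt hy))
  have hdensity : (fun y => ENNReal.ofReal
      (if 1 / 4 < y then 1 / (2 * π * y * √(y - 1 / 4)) else 0)) =
      (Ioi (1/4)).indicator fun y => ENNReal.ofReal (1 / (2 * π * y * √(y - 1 / 4))) := by
    ext y
    simp only [indicator_apply, mem_Ioi, apply_ite ENNReal.ofReal, ENNReal.ofReal_zero]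
  rw [uniformIoo, Measure.map_smul, ← image_kanterHalfInv_Ioi, hpush, hdensity,
    withDensity_indicator measurableSet_Ioi,
    ← withDensity_smul' _ _ (ENNReal.inv_ne_top.mpr (by simp [pi_pos]))]
  refine withDensity_congr_ae ?_
  filter_upwards [ae_restrict_mem measurableSet_Ioi] with y (hy : 1 / 4 < y)
  have hy0 : 0 < y := by linarith
  have hsqrt : 0 < √(y - 1 / 4) := sqrt_pos.mpr (by linarith)
  rw [Pi.smul_apply, smul_eq_mul, abs_of_pos (by positivity), ← ENNReal.ofReal_inv_of_pos pi_pos,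
    ← ENNReal.ofReal_mul (by positivity)]
  congr 1
  field_simp

/-- `a_{1/2}(u) = 1/(4 cos²(u/2))` on `(0,π)`, and the law of
`u ↦ 1/(4 cos²(u/2))` under the uniform measure on `(0,π)` has density
`y ↦ 1/(2π y √(y−1/4))` on `(1/4,∞)` and `0` elsewhere (in particular on `(0,1/4)`). -/
theorem kanter_half :
    (∀ u ∈ Set.Ioo (0:ℝ) π, kanterA (1/2) u = 1 / (4 * Real.cos (u / 2) ^ 2)) ∧
    Measure.map (fun u => 1 / (4 * Real.cos (u / 2) ^ 2)) uniformIoo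
      = volume.withDensity (fun y => ENNReal.ofReal
          (if 1 / 4 < y then 1 / (2 * π * y * Real.sqrt (y - 1 / 4)) else 0)) :=
  ⟨fun _ hu => kanterA_half hu, map_uniformIoo_one_div_four_mul_cos_sq⟩
end

section
/- For every integer j ≥ 2, Π_{k=1}^{j−1} [Γ(k/(j−1) + 1) / Γ(k/j + 1)] = (1/√(2π)) · (1/√(j(j−1))) · j^{j}/(j−1)^{j−1}. -/
/-!
By `Γ(x + 1) = x Γ(x)`, both products reduce to `∏_{k=1}^{n-1} Γ(k/n) = (2π)^{(n-1)/2} / √n`, the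
multiplication theorem at `z = 1/n`. Pairing `k` with `n - k`, the reflection formula turns the square
of that product into `π^{n-1} / ∏ sin(πk/n)`, and `∏_{k=1}^{n-1} sin(πk/n) = n / 2^{n-1}` is the
absolute value of `∏ (1 - ζ^k) = n` for a primitive `n`-th root of unity `ζ`.
-/

open Real
open scoped Nat

theorem norm_one_sub_exp_ofReal_mul_I (θ : ℝ) :
    ‖1 - Complex.exp (θ * Complex.I)‖ = 2 * |sin (θ / 2)| := by
  set E := Complex.exp ((θ / 2 : ℝ) * Complex.I)
  set F := Complex.exp (-(θ / 2 : ℝ) * Complex.I)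
  have hEF : E * F = 1 := by rw [← Complex.exp_add]; simp
  have hE2 : E ^ 2 = Complex.exp (θ * Complex.I) := by
    rw [← Complex.exp_nat_mul]; push_cast; ring_nf
  have h : 1 - Complex.exp (θ * Complex.I) = E * (-2 * Complex.I * Complex.sin (θ / 2 : ℝ)) := by
    rw [Complex.sin, ← hE2]
    linear_combination -hEF + (E * F - E ^ 2) * Complex.I_sq
  rw [h, norm_mul, Complex.norm_exp_ofReal_mul_I, norm_mul, norm_mul, ← Complex.ofReal_sin,
    Complex.norm_real, Real.norm_eq_abs]
  simp

theorem prod_sin_pi_mul_div (m : ℕ) :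
    ∏ k ∈ Finset.Icc 1 m, sin (π * k / (m + 1)) = (m + 1) / 2 ^ m := by
  have hζ := Complex.isPrimitiveRoot_exp (m + 1) m.succ_ne_zero
  have hnorm := congrArg norm hζ.prod_one_sub_pow_eq_order
  have hterm : ∀ k ∈ Finset.Icc 1 m,
      ‖1 - Complex.exp (2 * π * Complex.I / ↑(m + 1)) ^ k‖ = 2 * sin (π * k / (m + 1)) := by
    intro k hk
    have hpow : Complex.exp (2 * π * Complex.I / ↑(m + 1)) ^ k
        = Complex.exp ((2 * (π * k / (m + 1)) : ℝ) * Complex.I) := by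
      rw [← Complex.exp_nat_mul]
      push_cast
      ring_nf
    have hk : (k : ℝ) ≤ m + 1 := by exact_mod_cast (Finset.mem_Icc.mp hk).2.trans m.le_succ
    rw [hpow, norm_one_sub_exp_ofReal_mul_I, mul_div_cancel_left₀ _ two_ne_zero,
      abs_of_nonneg (sin_nonneg_of_nonneg_of_le_pi (by positivity) ?_)]
    rw [div_le_iff₀ (by positivity)]
    nlinarith [pi_pos]
  rw [Complex.norm_prod, Finset.range_eq_Ico,
    Finset.prod_Ico_add' (fun k ↦ ‖1 - Complex.exp (2 * π * Complex.I / ↑(m + 1)) ^ k‖) 0 m 1,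
    zero_add, Finset.Ico_add_one_right_eq_Icc, Finset.prod_congr rfl hterm,
    Finset.prod_mul_distrib, Finset.prod_const, Nat.card_Icc, Nat.add_sub_cancel,
    (by exact_mod_cast Complex.norm_natCast (m + 1) : ‖(m : ℂ) + 1‖ = m + 1)] at hnorm
  rw [eq_div_iff (by positivity), mul_comm, hnorm]

theorem prod_Gamma_div (m : ℕ) :
    ∏ k ∈ Finset.Icc 1 m, Gamma (k / (m + 1)) = √(2 * π) ^ m / √(m + 1) := by
  set P := ∏ k ∈ Finset.Icc 1 m, Gamma (k / (m + 1))
  have hP : 0 < P := Finset.prod_pos fun k hk ↦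
    Gamma_pos_of_pos (by have := (Finset.mem_Icc.mp hk).1; positivity)
  have hreflect : ∏ k ∈ Finset.Icc 1 m, Gamma (1 - k / (m + 1)) = P := by
    refine Finset.prod_nbij' (m + 1 - ·) (m + 1 - ·) ?_ ?_ ?_ ?_ ?_
      <;> intro k hk <;> simp only [Finset.mem_Icc] at hk ⊢
    any_goals omega
    rw [Nat.cast_sub (by omega)]
    push_cast
    field_simp
  have hsq : P ^ 2 = (√(2 * π) ^ m / √(m + 1)) ^ 2 := by
    calc P ^ 2 = ∏ k ∈ Finset.Icc 1 m, Gamma (k / (m + 1)) * Gamma (1 - k / (m + 1)) := by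
          rw [Finset.prod_mul_distrib, hreflect, sq]
      _ = ∏ k ∈ Finset.Icc 1 m, π / sin (π * k / (m + 1)) := by
          refine Finset.prod_congr rfl fun k _ ↦ ?_
          rw [Gamma_mul_Gamma_one_sub, mul_div_assoc]
      _ = (√(2 * π) ^ m / √(m + 1)) ^ 2 := by
          rw [Finset.prod_div_distrib, prod_sin_pi_mul_div, Finset.prod_const, Nat.card_Icc,
            Nat.add_sub_cancel, div_pow, ← pow_mul, mul_comm m, pow_mul, sq_sqrt (by positivity),
            sq_sqrt (by positivity)]
          field_simp
          ring
  exact (pow_left_inj₀ hP.le (by positivity) two_ne_zero).mp hsq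

theorem prod_Gamma_div_add_one (m : ℕ) :
    ∏ k ∈ Finset.Icc 1 m, Gamma (k / (m + 1) + 1)
      = m ! / (m + 1) ^ m * (√(2 * π) ^ m / √(m + 1)) := by
  have hfac : ∏ k ∈ Finset.Icc 1 m, ((k : ℝ) / (m + 1)) = m ! / (m + 1) ^ m := by
    rw [Finset.prod_div_distrib, Finset.prod_const, Nat.card_Icc, Nat.add_sub_cancel,
      ← Nat.cast_prod, ← Finset.Ico_add_one_right_eq_Icc, Finset.prod_Ico_id_eq_factorial]
  rw [← hfac, ← prod_Gamma_div, ← Finset.prod_mul_distrib]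
  refine Finset.prod_congr rfl fun k hk ↦ Gamma_add_one ?_
  have := (Finset.mem_Icc.mp hk).1
  positivity

/-- for every integer `j ≥ 2`,
`Π_{k=1}^{j−1} Γ(k/(j−1)+1)/Γ(k/j+1) = (2π)^{−1/2} (j(j−1))^{−1/2} · j^j/(j−1)^{j−1}`. -/
theorem gamma_product_constant {j : ℕ} (hj : 2 ≤ j) :
    ∏ k ∈ Finset.Icc 1 (j - 1),
        Real.Gamma ((k : ℝ) / ((j : ℝ) - 1) + 1) / Real.Gamma ((k : ℝ) / (j : ℝ) + 1)
      = (1 / Real.sqrt (2 * π)) * (1 / Real.sqrt ((j : ℝ) * ((j : ℝ) - 1))) *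
          ((j : ℝ) ^ j / ((j : ℝ) - 1) ^ (j - 1)) := by
  obtain ⟨m, rfl⟩ : ∃ m, j = m + 2 := ⟨j - 2, by omega⟩
  have hpred : ((m + 2 : ℕ) : ℝ) - 1 = m + 1 := by push_cast; ring
  have hcast : ((m + 2 : ℕ) : ℝ) = ((m + 1 : ℕ) : ℝ) + 1 := by push_cast; ring
  have hnum : ∏ k ∈ Finset.Icc 1 (m + 1), Gamma (k / (m + 1) + 1)
      = m ! / (m + 1) ^ m * (√(2 * π) ^ m / √(m + 1)) := by
    rw [Finset.prod_Icc_succ_top (by omega), prod_Gamma_div_add_one,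
      Nat.cast_succ, div_self (by positivity), one_add_one_eq_two, Gamma_two, mul_one]
  rw [show m + 2 - 1 = m + 1 from rfl, hpred, Finset.prod_div_distrib, hnum, hcast,
    prod_Gamma_div_add_one, Nat.factorial_succ]
  push_cast
  rw [sqrt_mul (show (0 : ℝ) ≤ m + 1 + 1 by positivity)]
  have ha : √((m : ℝ) + 1) ^ 2 = m + 1 := sq_sqrt (by positivity)
  have hb : √((m : ℝ) + 1 + 1) ^ 2 = m + 1 + 1 := sq_sqrt (by positivity)
  have hs : 0 < √(2 * π) := by positivity
  have ha0 : 0 < √((m : ℝ) + 1) := by positivity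
  have hb0 : 0 < √((m : ℝ) + 1 + 1) := by positivity
  generalize √(2 * π) = s at hs ⊢
  generalize √((m : ℝ) + 1) = a at ha ha0 ⊢
  generalize √((m : ℝ) + 1 + 1) = b at hb hb0 ⊢
  rw [← hb, ← ha]
  field_simp
  ring
end

section
/- For every fixed y > 1, one has lim_{α→0⁺} h_α(y) = 0, where h_α(y) = [(1−α)/π] · Σ_{k=0}^∞ [(−1)^k/k!] · [ sin((1−α)(k+1)π) · Γ((1−α)(k+1)) / Γ(1−α−kα) ] · y^{−(k+1)(1−α)−1} is the density of the Kanter random variable a_α(U). -/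
/-!
After the substitution `s = (k + 1) α`, the reflection formula `Γ(s) Γ(1 - s) = π / sin (π s)`
turns the `k`-th term into `sin (π s)² Γ(s) Γ(k + 1 - s) y^(-(k + 1)(1 - α) - 1) / (π k!)`.
For `α ≤ 1/2` this is at most `2π · y^(-k/2)`: for `s ≤ 1` the factor `sin (π s)²` cancels
the pole of `Γ` at `0`, and for `s ≥ 1` log-convexity of `Γ` gives `Γ(s) Γ(k + 1 - s) ≤ Γ(k)`. Each term
is continuous at `α = 0`, where it vanishes because `sin ((k + 1) π) = 0`, so dominated
convergence for series gives the limit `0`.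
-/

open Real Set Filter Topology
open scoped Nat

lemma ConvexOn.apply_add_apply_le_of_add_eq {s : Set ℝ} {f : ℝ → ℝ} (hf : ConvexOn ℝ s f)
    {x z u v : ℝ} (hx : x ∈ s) (hz : z ∈ s) (hu : u ∈ Icc x z) (huv : u + v = x + z) :
    f u + f v ≤ f x + f z := by
  obtain ⟨hxu, huz⟩ := hu
  rcases (hxu.trans huz).eq_or_lt with rfl | hxz
  · obtain rfl : u = x := le_antisymm huz hxu
    obtain rfl : v = u := by linarith
    rfl
  set t := (z - u) / (z - x)
  have ht : 0 ≤ t := div_nonneg (by linarith) (by linarith)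
  have ht' : 0 ≤ 1 - t := by rw [sub_nonneg, div_le_one (by linarith)]; linarith
  have hu : t * x + (1 - t) * z = u := by simp only [t]; field_simp; ring
  have hv : (1 - t) * x + t * z = v := by linarith
  have h1 := hf.2 hx hz ht ht' (by ring)
  have h2 := hf.2 hx hz ht' ht (by ring)
  simp only [smul_eq_mul, hu, hv] at h1 h2
  linarith

namespace Real

lemma Gamma_mul_Gamma_le_Gamma_add_sub_one {s a : ℝ} (hs : 1 ≤ s) (ha : 1 ≤ a) :
    Gamma s * Gamma a ≤ Gamma (s + a - 1) := by
  have hlog := convexOn_log_Gamma.apply_add_apply_le_of_add_eq (u := s) (v := a) (mem_Ioi.2 one_pos)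
    (mem_Ioi.2 (by linarith : (0 : ℝ) < s + a - 1)) ⟨hs, by linarith⟩ (by ring)
  simp only [Function.comp_apply, Gamma_one, log_one, zero_add] at hlog
  rw [← log_mul (by positivity) (by positivity)] at hlog
  exact (log_le_log_iff (by positivity) (Gamma_pos_of_pos (by linarith))).1 hlog

lemma Gamma_le_factorial {x : ℝ} {k : ℕ} (h1 : 1 ≤ x) (h2 : x ≤ k + 1) : Gamma x ≤ k ! := by
  have := convexOn_Gamma.le_max_of_mem_Icc (mem_Ioi.2 one_pos)
    (mem_Ioi.2 (by positivity : (0 : ℝ) < k + 1)) ⟨h1, h2⟩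
  rwa [Gamma_one, Gamma_nat_eq_factorial, max_eq_right (mod_cast k.factorial_pos)] at this

lemma Gamma_le_two_mul_factorial {x : ℝ} {k : ℕ} (h1 : 1 / 2 ≤ x) (h2 : x ≤ k + 1) :
    Gamma x ≤ 2 * k ! := by
  have := convexOn_Gamma.le_max_of_mem_Icc (mem_Ioi.2 one_half_pos)
    (mem_Ioi.2 (by positivity : (0 : ℝ) < k + 1)) ⟨h1, h2⟩
  rw [Gamma_one_half_eq, Gamma_nat_eq_factorial] at this
  have hπ : √π ≤ 2 := sqrt_le_iff.2 ⟨zero_le_two, by linarith [pi_le_four]⟩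
  have hk : (1 : ℝ) ≤ k ! := mod_cast k.factorial_pos
  exact this.trans (max_le (by linarith) (by linarith))

lemma sin_div_Gamma_one_sub (s : ℝ) :
    sin (π * s) / Gamma (1 - s) = sin (π * s) ^ 2 * Gamma s / π := by
  by_cases h : sin (π * s) = 0
  · simp [h]
  have hrefl := Gamma_mul_Gamma_one_sub s
  have hΓ : Gamma (1 - s) ≠ 0 := by
    intro h0
    rw [h0, mul_zero] at hrefl
    exact div_ne_zero pi_ne_zero h hrefl.symm
  rw [eq_div_iff h] at hrefl
  rw [div_eq_div_iff hΓ pi_ne_zero]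
  linear_combination (-sin (π * s)) * hrefl

lemma sin_sq_mul_Gamma_mul_Gamma_le {s a : ℝ} {k : ℕ} (hs : 0 < s) (hsa : s ≤ a)
    (hk : s + a = k + 1) : sin (π * s) ^ 2 * Gamma s * Gamma a ≤ 2 * π ^ 2 * k ! := by
  have hπ : 1 ≤ π ^ 2 := one_le_pow₀ (by linarith [pi_gt_three])
  have hΓs₀ := Gamma_pos_of_pos hs
  have hΓa₀ := Gamma_pos_of_pos (hs.trans_le hsa)
  rcases le_total s 1 with hs1 | hs1
  · have hΓs : s * Gamma s ≤ 1 := by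
      rw [← Gamma_add_one hs.ne']
      simpa using Gamma_le_factorial (k := 1) (by linarith) (by push_cast; linarith)
    have hsin : sin (π * s) ^ 2 * Gamma s ≤ π ^ 2 := calc
      sin (π * s) ^ 2 * Gamma s ≤ (π * s) ^ 2 * Gamma s :=
        mul_le_mul_of_nonneg_right sin_sq_le_sq hΓs₀.le
      _ = π ^ 2 * s * (s * Gamma s) := by ring
      _ ≤ π ^ 2 * 1 * 1 := by gcongr
      _ = π ^ 2 := by ring
    calc sin (π * s) ^ 2 * Gamma s * Gamma a ≤ π ^ 2 * (2 * k !) :=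
          mul_le_mul hsin (Gamma_le_two_mul_factorial (by linarith) (by linarith)) hΓa₀.le
            (by positivity)
      _ = 2 * π ^ 2 * k ! := by ring
  · have hk1 : 1 ≤ k := by exact_mod_cast (by linarith : (1 : ℝ) ≤ k)
    calc sin (π * s) ^ 2 * Gamma s * Gamma a ≤ 1 * (Gamma s * Gamma a) := by
          rw [mul_assoc]
          exact mul_le_mul_of_nonneg_right (sin_sq_le_one _) (mul_pos hΓs₀ hΓa₀).le
      _ ≤ Gamma k := by
          rw [one_mul, show (k : ℝ) = s + a - 1 by linarith]
          exact Gamma_mul_Gamma_le_Gamma_add_sub_one hs1 (by linarith)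
      _ ≤ k ! := Gamma_le_factorial (mod_cast hk1) (by linarith)
      _ ≤ 2 * π ^ 2 * k ! := le_mul_of_one_le_left (by positivity) (by linarith)

end Real

noncomputable def kanterTerm (y α : ℝ) (k : ℕ) : ℝ :=
  (-1) ^ k / k ! * (sin ((1 - α) * (k + 1) * π) * Gamma ((1 - α) * (k + 1)) /
    Gamma (1 - α - k * α)) * y ^ (-((k + 1) * (1 - α)) - 1)

lemma kanterTerm_eq (y α : ℝ) (k : ℕ) :
    kanterTerm y α k = sin (π * ((k + 1) * α)) ^ 2 * Gamma ((k + 1) * α) *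
      Gamma ((1 - α) * (k + 1)) / (π * k !) * y ^ (-((k + 1) * (1 - α)) - 1) := by
  have hsin : sin ((1 - α) * (k + 1) * π) = (-1) ^ k * sin (π * ((k + 1) * α)) := by
    rw [show (1 - α) * (k + 1) * π = ((k + 1 : ℕ) : ℝ) * π - π * ((k + 1) * α) by push_cast; ring,
      sin_nat_mul_pi_sub, pow_succ]
    ring
  have hΓ : 1 - α - k * α = 1 - (k + 1) * α := by ring
  rw [kanterTerm, hsin, hΓ, mul_div_right_comm, mul_div_assoc, sin_div_Gamma_one_sub]
  have hsq : ((-1 : ℝ) ^ k) ^ 2 = 1 := by rw [← pow_mul, mul_comm, pow_mul, neg_one_sq, one_pow]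
  linear_combination (sin (π * ((k + 1) * α)) ^ 2 * Gamma ((k + 1) * α) *
      Gamma ((1 - α) * (k + 1)) / (π * k !) * y ^ (-((k + 1) * (1 - α)) - 1)) * hsq

lemma abs_kanterTerm_le {y α : ℝ} (hy : 1 ≤ y) (hα : α ∈ Ioc 0 (1 / 2)) (k : ℕ) :
    |kanterTerm y α k| ≤ 2 * π * (y ^ (-(1 / 2) : ℝ)) ^ k := by
  obtain ⟨hα0, hα1⟩ := hα
  rw [kanterTerm_eq]
  set s := ((k : ℝ) + 1) * α
  set a := (1 - α) * ((k : ℝ) + 1)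
  have hs : 0 < s := by positivity
  have ha : 0 < a := mul_pos (by linarith) (by positivity)
  have hΓ : sin (π * s) ^ 2 * Gamma s * Gamma a ≤ 2 * π ^ 2 * k ! :=
    sin_sq_mul_Gamma_mul_Gamma_le hs (by nlinarith) (by ring)
  have hy' : y ^ (-((k + 1) * (1 - α)) - 1) ≤ (y ^ (-(1 / 2) : ℝ)) ^ k := by
    rw [← rpow_natCast, ← rpow_mul (by linarith)]
    exact rpow_le_rpow_of_exponent_le hy (by nlinarith)
  have hnn : 0 ≤ sin (π * s) ^ 2 * Gamma s * Gamma a :=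
    mul_nonneg (mul_nonneg (sq_nonneg _) (Gamma_pos_of_pos hs).le) (Gamma_pos_of_pos ha).le
  rw [abs_of_nonneg (mul_nonneg (by positivity) (rpow_nonneg (by linarith) _))]
  calc _ ≤ 2 * π ^ 2 * k ! / (π * k !) * (y ^ (-(1 / 2) : ℝ)) ^ k :=
        mul_le_mul (by gcongr) hy' (rpow_nonneg (by linarith) _) (by positivity)
    _ = 2 * π * (y ^ (-(1 / 2) : ℝ)) ^ k := by field_simp

lemma tendsto_kanterTerm_zero {y : ℝ} (hy : y ≠ 0) (k : ℕ) :
    Tendsto (fun α => kanterTerm y α k) (𝓝 0) (𝓝 0) := by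
  have hΓ {x : ℝ} (hx : 0 < x) : ContinuousAt Gamma x :=
    (differentiableOn_Gamma_Ioi.differentiableAt (Ioi_mem_nhds hx)).continuousAt
  have hcont : ContinuousAt (fun α => kanterTerm y α k) 0 := by
    unfold kanterTerm
    refine .mul (continuousAt_const.mul (.div ?_ ?_ ?_))
      (continuousAt_const.rpow (by fun_prop) (.inl hy))
    · exact (continuous_sin.comp (by fun_prop)).continuousAt.mul
        ((hΓ (by positivity)).comp (f := fun α : ℝ => (1 - α) * ((k : ℝ) + 1)) (by fun_prop))
    · exact (hΓ (by norm_num)).comp (f := fun α : ℝ => 1 - α - (k : ℝ) * α) (by fun_prop)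
    · simp
  have h0 : kanterTerm y 0 k = 0 := by
    have hsin : sin (((k : ℝ) + 1) * π) = 0 := mod_cast sin_nat_mul_pi (k + 1)
    simp [kanterTerm, hsin]
  simpa only [h0] using hcont.tendsto

/-- for fixed `y > 1`, the density
`h_α(y) = [(1−α)/π] Σ_k (−1)^k/k! · sin((1−α)(k+1)π)Γ((1−α)(k+1))/Γ(1−α−kα) · y^{−(k+1)(1−α)−1}`
of the Kanter random variable tends to `0` as `α → 0⁺`. -/
theorem kanter_density_tendsto_zero {y : ℝ} (hy : 1 < y) :
    Filter.Tendsto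
      (fun α : ℝ => ((1 - α) / π) * ∑' k : ℕ,
        (-1 : ℝ) ^ k / k.factorial *
          (Real.sin ((1 - α) * ((k : ℝ) + 1) * π) * Real.Gamma ((1 - α) * ((k : ℝ) + 1)) /
            Real.Gamma (1 - α - (k : ℝ) * α)) *
          y ^ (-(((k : ℝ) + 1) * (1 - α)) - 1))
      (nhdsWithin 0 (Set.Ioi 0)) (nhds 0) := by
  have hr : y ^ (-(1 / 2) : ℝ) < 1 := rpow_lt_one_of_one_lt_of_neg hy (by norm_num)
  have hbound : ∀ᶠ α in 𝓝[>] (0 : ℝ), ∀ k,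
      ‖kanterTerm y α k‖ ≤ 2 * π * (y ^ (-(1 / 2) : ℝ)) ^ k := by
    filter_upwards [Ioc_mem_nhdsGT (by norm_num : (0 : ℝ) < 1 / 2)] with α hα k
    exact abs_kanterTerm_le hy.le hα k
  have hseries : Tendsto (fun α => ∑' k, kanterTerm y α k) (𝓝[>] 0) (𝓝 0) := by
    simpa only [tsum_zero] using tendsto_tsum_of_dominated_convergence
      ((summable_geometric_of_lt_one (by positivity) hr).mul_left (2 * π))
      (fun k => (tendsto_kanterTerm_zero (by linarith) k).mono_left nhdsWithin_le_nhds) hbound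
  have hfactor : Tendsto (fun α : ℝ => (1 - α) / π) (𝓝[>] 0) (𝓝 ((1 - 0) / π)) :=
    ((continuous_const.sub continuous_id).div_const π).continuousAt.tendsto.mono_left
      nhdsWithin_le_nhds
  simpa only [mul_zero, kanterTerm] using hfactor.mul hseries
end

section
/- As α → 0⁺, the pushforward under a_α of the uniform probability measure on (0,π) converges weakly (in distribution) to the Dirac measure δ_1 at the point 1. -/
open Real MeasureTheory

open Filter Topology

/-! Write `c_α(u) = α · (u · sinc(αu) / sin u)`. For `u ∈ (0,π)` the second factor tends
to `u / sin u > 0`, so `c_α(u)^α → 1` because `α^α → 1`, while `c_{1-α}(u)^{1-α} → c_1(u) = 1`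
by continuity. Hence `a_α(u) → 1` for every `u ∈ (0,π)`, and almost sure convergence of `a_α(U)`
to the constant `1` implies convergence in distribution to `δ_1`. -/

lemma Real.tendsto_rpow_self_nhdsGT_zero : Tendsto (fun x : ℝ => x ^ x) (𝓝[>] 0) (𝓝 1) := by
  have hlog : Tendsto (fun x : ℝ => x * log x) (𝓝[>] 0) (𝓝 0) := by
    simpa using (continuous_mul_log.tendsto 0).mono_left nhdsWithin_le_nhds
  have hexp := (continuous_exp.tendsto 0).comp hlog
  rw [exp_zero] at hexp
  refine hexp.congr' ?_
  filter_upwards [self_mem_nhdsWithin] with x hx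
  simp [rpow_def_of_pos hx, mul_comm]

lemma kanterC_eq_mul_sinc (α u : ℝ) : kanterC α u = α * (u * sinc (α * u) / sin u) := by
  rcases eq_or_ne (α * u) 0 with h | h
  · rcases mul_eq_zero.1 h with rfl | rfl <;> simp [kanterC]
  · obtain ⟨hα, hu⟩ := mul_ne_zero_iff.1 h
    rw [kanterC, sinc_of_ne_zero h]
    field_simp

section Pointwise

variable {u : ℝ}

lemma tendsto_kanterC_rpow_self (hu : u ∈ Set.Ioo 0 π) :
    Tendsto (fun α => kanterC α u ^ α) (𝓝[>] 0) (𝓝 1) := by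
  have hpos : 0 < u / sin u := div_pos hu.1 (sin_pos_of_pos_of_lt_pi hu.1 hu.2)
  have hsinc : Tendsto (fun α => u * sinc (α * u) / sin u) (𝓝[>] 0) (𝓝 (u / sin u)) := by
    have : Continuous fun α => u * sinc (α * u) / sin u := by fun_prop
    simpa [sinc_zero] using (this.tendsto 0).mono_left nhdsWithin_le_nhds
  have hpow := tendsto_rpow_self_nhdsGT_zero.mul
    (hsinc.rpow (tendsto_id.mono_left nhdsWithin_le_nhds) (Or.inl hpos.ne'))
  rw [rpow_zero, mul_one] at hpow
  refine hpow.congr' ?_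
  filter_upwards [self_mem_nhdsWithin, hsinc.eventually (lt_mem_nhds hpos)] with α hα hsinc_pos
  rw [kanterC_eq_mul_sinc, mul_rpow (le_of_lt hα) hsinc_pos.le]
  rfl

lemma tendsto_kanterC_one_sub_rpow_one_sub (hu : sin u ≠ 0) :
    Tendsto (fun α => kanterC (1 - α) u ^ (1 - α)) (𝓝 0) (𝓝 1) := by
  have : ContinuousAt (fun α => kanterC (1 - α) u ^ (1 - α)) 0 := by
    unfold kanterC
    exact ContinuousAt.rpow (by fun_prop) (by fun_prop) (by simp [hu])
  simpa [kanterC, hu] using this.tendsto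

lemma tendsto_kanterB (hu : u ∈ Set.Ioo 0 π) :
    Tendsto (fun α => kanterB α u) (𝓝[>] 0) (𝓝 1) := by
  simpa only [kanterB, mul_one] using (tendsto_kanterC_rpow_self hu).mul
    ((tendsto_kanterC_one_sub_rpow_one_sub (sin_pos_of_pos_of_lt_pi hu.1 hu.2).ne').mono_left
      nhdsWithin_le_nhds)

lemma tendsto_kanterA (hu : u ∈ Set.Ioo 0 π) :
    Tendsto (fun α => kanterA α u) (𝓝[>] 0) (𝓝 1) := by
  have hexp : Tendsto (fun α : ℝ => 1 / (1 - α)) (𝓝[>] 0) (𝓝 1) := by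
    have : ContinuousAt (fun α : ℝ => 1 / (1 - α)) 0 := by fun_prop (disch := norm_num)
    simpa using this.tendsto.mono_left nhdsWithin_le_nhds
  simpa only [kanterA, one_rpow] using (tendsto_kanterB hu).rpow hexp (Or.inl one_ne_zero)

end Pointwise

lemma measurable_kanterA (α : ℝ) : Measurable (kanterA α) := by
  unfold kanterA kanterB kanterC
  fun_prop

instance isProbabilityMeasure_uniformIoo : IsProbabilityMeasure uniformIoo := by
  constructor
  simp only [uniformIoo, Measure.smul_apply, Measure.restrict_apply MeasurableSet.univ,
    Set.univ_inter, volume_Ioo, smul_eq_mul, sub_zero]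
  exact ENNReal.inv_mul_cancel (by simp [pi_pos]) ENNReal.ofReal_ne_top

lemma ae_mem_Ioo_uniformIoo : ∀ᵐ u ∂uniformIoo, u ∈ Set.Ioo 0 π :=
  Measure.ae_smul_measure (ae_restrict_mem measurableSet_Ioo) _

lemma tendstoInDistribution_kanterA :
    TendstoInDistribution kanterA (𝓝[>] 0) (fun _ => (1 : ℝ)) (fun _ => uniformIoo) uniformIoo :=
  tendstoInDistribution_of_ae_tendsto (fun α => (measurable_kanterA α).aemeasurable)
    aemeasurable_const (ae_mem_Ioo_uniformIoo.mono fun _ => tendsto_kanterA)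

/-- as `α → 0⁺`, the law of the Kanter random variable `a_α(U)` converges
weakly to the Dirac mass at `1`: for every bounded continuous `f`,
`∫ f d(a_α)_*(uniform) → f(1)`. -/
theorem kanter_weak_convergence :
    ∀ f : BoundedContinuousFunction ℝ ℝ,
      Filter.Tendsto (fun α : ℝ => ∫ x, f x ∂(Measure.map (kanterA α) uniformIoo))
        (nhdsWithin 0 (Set.Ioi 0)) (nhds (f 1)) := by
  intro f
  simpa [Measure.map_const] using ProbabilityMeasure.tendsto_iff_forall_integral_tendsto.1
    tendstoInDistribution_kanterA.tendsto f
end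

section
/- For every fixed x > 1, lim_{α→0⁺} Σ_{k=0}^∞ [(−1)^k / (k! · Γ(1−kα) · Γ(1−k(1−α)))] · x^{−k} = 1 (here 1/Γ is interpreted as 0 at the nonpositive-integer poles of Γ); equivalently, lim_{α→0⁺} (1/π)·a_{1−α}^{−1}(x^{1/α}) = 1. -/
/-!
By the reflection formula `1 / Γ(1 - t) = Γ(t) sin(πt) / π`, and since `kα + k(1 - α) = k`, the
`k`-th coefficient has absolute value `Γ(kα) Γ(k(1 - α)) sin²(πkα) / (π² k!)`. Bounding
`sin²(πkα) ≤ (πkα)²` and using the log-convexity of `Γ` in the form `Γ(t + 1) Γ(s) ≤ Γ(t + s)`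
(`s ≥ 1`) shows that it is at most `α` for every `k ≥ 1`. Hence the series converges termwise to
its constant term `1`, dominated by the geometric series `∑ x⁻ᵏ`.
-/

open Real Filter Topology

namespace Real

/-- At an integer `s ≥ 1` both sides vanish, since Mathlib's `Gamma` is `0` at its poles. -/
lemma inv_Gamma_one_sub {s : ℝ} (hs : Gamma s ≠ 0) :
    (Gamma (1 - s))⁻¹ = Gamma s * sin (π * s) / π := by
  have h := congrArg (·⁻¹) (Gamma_mul_Gamma_one_sub s)
  simp only [mul_inv, inv_div] at h
  rw [← mul_inv_cancel_left₀ hs (Gamma (1 - s))⁻¹, h, mul_div_assoc]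

lemma Gamma_add_one_mul_Gamma_le {a b : ℝ} (ha : 0 < a) (hb : 1 ≤ b) :
    Gamma (a + 1) * Gamma b ≤ Gamma (a + b) := by
  rcases hb.eq_or_lt with rfl | hb
  · rw [Gamma_one, mul_one]
  -- `a + 1` and `b` are the convex combinations of `1` and `a + b` with weights `l` and `1 - l`.
  set l := a / (a + b - 1)
  have hl0 : 0 < l := div_pos ha (by linarith)
  have hl1 : l < 1 := (div_lt_one (by linarith)).2 (by linarith)
  have hl : l * (a + b - 1) = a := div_mul_cancel₀ a (by linarith)
  have hab : 0 < a + b := by linarith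
  have h₁ : Gamma (a + 1) ≤ Gamma (a + b) ^ l := by
    have := Gamma_mul_add_mul_le_rpow_Gamma_mul_rpow_Gamma one_pos hab (sub_pos.2 hl1) hl0
      (sub_add_cancel 1 l)
    rwa [show (1 - l) * 1 + l * (a + b) = a + 1 by linear_combination hl, Gamma_one, one_rpow,
      one_mul] at this
  have h₂ : Gamma b ≤ Gamma (a + b) ^ (1 - l) := by
    have := Gamma_mul_add_mul_le_rpow_Gamma_mul_rpow_Gamma one_pos hab hl0 (sub_pos.2 hl1)
      (add_sub_cancel l 1)
    rwa [show l * 1 + (1 - l) * (a + b) = b by linear_combination -hl, Gamma_one, one_rpow,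
      one_mul] at this
  calc Gamma (a + 1) * Gamma b ≤ Gamma (a + b) ^ l * Gamma (a + b) ^ (1 - l) :=
        mul_le_mul h₁ h₂ (Gamma_pos_of_pos (by linarith)).le (by positivity)
    _ = Gamma (a + b) := by
        rw [← rpow_add (Gamma_pos_of_pos hab), add_sub_cancel, rpow_one]

lemma abs_inv_Gamma_one_sub_mul_Gamma_one_sub {t s : ℝ} {n : ℕ} (ht : 0 < t) (hs : 0 < s)
    (hn : t + s = n) :
    |(Gamma (1 - t) * Gamma (1 - s))⁻¹| = Gamma t * Gamma s * sin (π * t) ^ 2 / π ^ 2 := by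
  have hsin : |sin (π * s)| = |sin (π * t)| := by
    rw [show π * s = n * π - π * t by rw [← hn]; ring, sin_nat_mul_pi_sub]
    simp [abs_mul]
  rw [mul_inv, inv_Gamma_one_sub (Gamma_pos_of_pos ht).ne', inv_Gamma_one_sub
    (Gamma_pos_of_pos hs).ne', abs_mul, abs_div, abs_div, abs_mul, abs_mul, hsin,
    abs_of_pos (Gamma_pos_of_pos ht), abs_of_pos (Gamma_pos_of_pos hs), abs_of_pos pi_pos,
    ← sq_abs (sin _)]
  ring

lemma abs_inv_Gamma_one_sub_mul_Gamma_one_sub_le {t s : ℝ} {n : ℕ} (ht : 0 < t) (hs : 1 ≤ s)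
    (hn : t + s = n) : |(Gamma (1 - t) * Gamma (1 - s))⁻¹| ≤ t * Gamma n := by
  rw [abs_inv_Gamma_one_sub_mul_Gamma_one_sub ht (by linarith) hn, ← hn]
  calc Gamma t * Gamma s * sin (π * t) ^ 2 / π ^ 2 ≤ Gamma t * Gamma s * (π * t) ^ 2 / π ^ 2 := by
        gcongr Gamma t * Gamma s * ?_ / π ^ 2; exact sin_sq_le_sq
    _ = t * (Gamma (t + 1) * Gamma s) := by
        rw [Gamma_add_one ht.ne']; field_simp
    _ ≤ t * Gamma (t + s) := by gcongr; exact Gamma_add_one_mul_Gamma_le ht hs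

end Real

noncomputable def freeStableCoeff (α : ℝ) (k : ℕ) : ℝ :=
  (-1 : ℝ) ^ k / (k.factorial * Gamma (1 - (k : ℝ) * α) * Gamma (1 - (k : ℝ) * (1 - α)))

@[simp]
lemma freeStableCoeff_zero_right (α : ℝ) : freeStableCoeff α 0 = 1 := by
  simp [freeStableCoeff]

lemma abs_freeStableCoeff (α : ℝ) (k : ℕ) :
    |freeStableCoeff α k| =
      |(Gamma (1 - k * α) * Gamma (1 - k * (1 - α)))⁻¹| / k.factorial := by
  rw [freeStableCoeff, mul_assoc, abs_div, abs_pow, abs_neg, abs_one, one_pow, one_div, abs_mul,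
    mul_inv, Nat.abs_cast, abs_inv, mul_comm, div_eq_mul_inv]

lemma abs_freeStableCoeff_le {α : ℝ} (hα₀ : 0 < α) (hα : α ≤ 1 / 2) {k : ℕ} (hk : k ≠ 0) :
    |freeStableCoeff α k| ≤ α := by
  have hk₀ : (0 : ℝ) < k := by positivity
  rw [abs_freeStableCoeff]
  rcases (Nat.one_le_iff_ne_zero.2 hk).eq_or_lt with rfl | hk₂
  · -- Here `1 - α < 1` rules out log-convexity, but the coefficient is exactly `-sin (π α) / π`.
    rw [Nat.cast_one, one_mul, one_mul, sub_sub_cancel, mul_comm, Gamma_mul_Gamma_one_sub,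
      inv_div, Nat.factorial_one, Nat.cast_one, div_one, abs_div, abs_of_pos pi_pos,
      div_le_iff₀ pi_pos]
    calc |sin (π * α)| ≤ |π * α| := abs_sin_le_abs
      _ = α * π := by rw [abs_of_pos (by positivity), mul_comm]
  · have hk₂ : (2 : ℝ) ≤ k := by exact_mod_cast hk₂
    have hfac : (k.factorial : ℝ) = k * Gamma k := by
      rw [← Gamma_nat_eq_factorial, Gamma_add_one hk₀.ne']
    calc |(Gamma (1 - k * α) * Gamma (1 - k * (1 - α)))⁻¹| / k.factorial
        ≤ k * α * Gamma k / k.factorial := by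
          gcongr
          exact abs_inv_Gamma_one_sub_mul_Gamma_one_sub_le (by positivity) (by nlinarith)
            (by ring)
      _ = α := by
          rw [hfac]; field_simp [(Gamma_pos_of_pos hk₀).ne']

lemma tendsto_freeStableCoeff (k : ℕ) :
    Tendsto (freeStableCoeff · k) (𝓝[>] 0) (𝓝 (if k = 0 then 1 else 0)) := by
  split_ifs with hk
  · subst hk
    simp only [freeStableCoeff_zero_right, tendsto_const_nhds]
  · refine squeeze_zero_norm' ?_ (tendsto_nhdsWithin_of_tendsto_nhds tendsto_id)
    filter_upwards [Ioo_mem_nhdsGT (by norm_num : (0 : ℝ) < 1 / 2)] with α hα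
    exact abs_freeStableCoeff_le hα.1 hα.2.le hk

/-- for fixed `x > 1`,
`Σ_k (−1)^k/(k! Γ(1−kα) Γ(1−k(1−α))) · x^{−k} → 1` as `α → 0⁺`
(`Real.Gamma` vanishes at the nonpositive-integer poles, so `1/Γ` is `0` there);
this is the limit of `(1/π)·a_{1−α}^{−1}(x^{1/α})`. -/
theorem free_stable_distribution_tendsto_one {x : ℝ} (hx : 1 < x) :
    Filter.Tendsto
      (fun α : ℝ => ∑' k : ℕ,
        (-1 : ℝ) ^ k /
          (k.factorial * Real.Gamma (1 - (k : ℝ) * α) * Real.Gamma (1 - (k : ℝ) * (1 - α))) *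
          (1 / x) ^ k)
      (nhdsWithin 0 (Set.Ioi 0)) (nhds 1) := by
  have hq₀ : 0 ≤ 1 / x := by positivity
  have hq₁ : 1 / x < 1 := (div_lt_one (by positivity)).2 hx
  have hbound : ∀ᶠ α in 𝓝[>] 0, ∀ k, ‖freeStableCoeff α k * (1 / x) ^ k‖ ≤ (1 / x) ^ k := by
    filter_upwards [Ioo_mem_nhdsGT (by norm_num : (0 : ℝ) < 1 / 2)] with α hα k
    rw [norm_mul, norm_pow, Real.norm_of_nonneg hq₀]
    refine mul_le_of_le_one_left (by positivity) ?_
    rcases eq_or_ne k 0 with rfl | hk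
    · simp
    · exact (abs_freeStableCoeff_le hα.1 hα.2.le hk).trans (by linarith [hα.2])
  have hlim := tendsto_tsum_of_dominated_convergence (summable_geometric_of_lt_one hq₀ hq₁)
    (fun k => (tendsto_freeStableCoeff k).mul_const _) hbound
  rwa [show ∑' k : ℕ, (if k = 0 then 1 else 0) * (1 / x) ^ k = 1 by simp] at hlim
end

section
/- For every 0 < α < 1 and every θ ∈ (0,π), setting r = (sin(αθ)/sin(θ))^{1/(1−α)}, the complex number −r·e^{iθ} + r^α·e^{iαθ} is real and equals a_α(θ); that is, r·sin(θ) = r^α·sin(αθ) and −r·cos(θ) + r^α·cos(αθ) = a_α(θ). -/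
open Real MeasureTheory

/-! With `r = c_α(θ)^{1/(1−α)}` we have `r^{1−α} = c_α(θ)`, i.e. `r = r^α c_α(θ)`, which is the
vanishing of the imaginary part. For the real part, the subtraction formula
`sin((1−α)θ) = sin θ cos(αθ) − cos θ sin(αθ)` gives `cos(αθ) − c_α(θ) cos θ = c_{1−α}(θ)`,
so the real part is `r^α c_{1−α}(θ)`; and raising `b_α(θ)` to the power `1/(1−α)` gives
exactly `(c_α(θ)^{1/(1−α)})^α c_{1−α}(θ) = r^α c_{1−α}(θ)`. -/

lemma kanterC_pos {α u : ℝ} (hα0 : 0 < α) (hα1 : α ≤ 1) (hu : u ∈ Set.Ioo 0 π) :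
    0 < kanterC α u := by
  obtain ⟨hu0, huπ⟩ := hu
  have hαu : α * u < π := lt_of_le_of_lt (by nlinarith) huπ
  exact div_pos (sin_pos_of_pos_of_lt_pi (mul_pos hα0 hu0) hαu) (sin_pos_of_pos_of_lt_pi hu0 huπ)

lemma kanterC_mul_sin {α u : ℝ} (hu : Real.sin u ≠ 0) :
    kanterC α u * Real.sin u = Real.sin (α * u) :=
  div_mul_cancel₀ _ hu

lemma kanterC_one_sub {α u : ℝ} (hu : Real.sin u ≠ 0) :
    kanterC (1 - α) u = Real.cos (α * u) - kanterC α u * Real.cos u := by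
  rw [kanterC, kanterC, sub_mul, one_mul, Real.sin_sub]
  field_simp

lemma kanterA_eq {α u : ℝ} (hα0 : 0 < α) (hα1 : α < 1) (hu : u ∈ Set.Ioo 0 π) :
    kanterA α u = (kanterC α u ^ (1 / (1 - α))) ^ α * kanterC (1 - α) u := by
  have hc := (kanterC_pos hα0 hα1.le hu).le
  have hc' := (kanterC_pos (sub_pos.2 hα1) (by linarith) hu).le
  have h1α : 1 - α ≠ 0 := (sub_pos.2 hα1).ne'
  rw [kanterA, kanterB, mul_rpow (rpow_nonneg hc _) (rpow_nonneg hc' _), ← rpow_mul hc,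
    ← rpow_mul hc', ← rpow_mul hc, mul_one_div_cancel h1α, rpow_one, mul_comm α]

/-- for `0 < α < 1` and `θ ∈ (0,π)`, with `r = (sin(αθ)/sin θ)^{1/(1−α)}`,
the complex number `−r e^{iθ} + r^α e^{iαθ}` is real and equals `a_α(θ)`: its imaginary
part vanishes, `r sin θ = r^α sin(αθ)`, and `−r cos θ + r^α cos(αθ) = a_α(θ)`. -/
theorem kanter_contour {α θ : ℝ} (hα0 : 0 < α) (hα1 : α < 1) (hθ : θ ∈ Set.Ioo 0 π)
    {r : ℝ} (hr : r = (Real.sin (α * θ) / Real.sin θ) ^ (1 / (1 - α))) :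
    r * Real.sin θ = r ^ α * Real.sin (α * θ) ∧
    -r * Real.cos θ + r ^ α * Real.cos (α * θ) = kanterA α θ := by
  change r = kanterC α θ ^ (1 / (1 - α)) at hr
  have hsin : Real.sin θ ≠ 0 := (sin_pos_of_pos_of_lt_pi hθ.1 hθ.2).ne'
  have hc := kanterC_pos hα0 hα1.le hθ
  have hr0 : 0 ≤ r := hr ▸ rpow_nonneg hc.le _
  have hr_pow : r ^ (1 - α) = kanterC α θ := by
    rw [hr, one_div, rpow_inv_rpow hc.le (sub_pos.2 hα1).ne']
  have hr_eq : r = r ^ α * kanterC α θ := by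
    rw [← hr_pow, ← rpow_add' hr0 (by norm_num), add_sub_cancel, rpow_one]
  constructor
  · rw [← kanterC_mul_sin hsin, ← mul_assoc, ← hr_eq]
  · rw [kanterA_eq hα0 hα1 hθ, ← hr, kanterC_one_sub hsin]
    nth_rewrite 1 [hr_eq]
    ring
end
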